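/- arXiv:1411.4322 — 6 statements merged into one kernel-verified Lean document; each statement's English description precedes it below -/
import Mathlib

section
/- Let α, β ∈ 𝔻 with α ≠ β, let t ∈ (0,1), ω ∈ ℂ with |ω| = 1, and set τ = conj(α-β)/(α-β), γ = t·α + (1-t)·β. Define F(x₁,x₂) = (t·conj(ω)·x₁ + (1-t)·x₂ + τ·conj(ω)·x₁·x₂) / (1 + τ·((1-t)·conj(ω)·x₁ + t·x₂)) and φ(λ) = (ω·λ·m_α(λ), λ·m_β(λ)) where m_α(λ)=(α-λ)/(1-conj(α)λ). Then for all λ ∈ 𝔻, F(φ(λ)) = λ·m_γ(λ). -/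
open Complex Metric ComplexConjugate

/-!
Since `|ω| = 1`, the factor `ω` cancels, and with `x = m_α(λ)`, `y = m_β(λ)`, `c = τλ` one gets
`F(φ(λ)) = λ (t x + (1-t) y + c x y) / (1 + c ((1-t) x + t y))`. Let `p = 1 - conj(α) λ` and
`q = 1 - conj(β) λ` be the Möbius denominators, so that `x p = α - λ`, `y q = β - λ`, and
`m_γ(λ) = (t x p + (1-t) y q) / (t p + (1-t) q)`. Cross-multiplying, the two sides differ by
`t (1-t) (y - x) (p - q + c (x p - y q))`, and the last factor is `λ (τ (α - β) - conj(α - β)) = 0`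
by the choice of `τ`. The denominators do not vanish because Möbius maps preserve the disc and
`|τ| ≤ 1`.
-/

noncomputable def mobius (c z : ℂ) : ℂ := (c - z) / (1 - conj c * z)

lemma mobius_apply (c z : ℂ) : mobius c z = (c - z) / (1 - conj c * z) := rfl

lemma one_add_ne_zero_of_norm_lt_one {u : ℂ} (hu : ‖u‖ < 1) : 1 + u ≠ 0 := by
  rw [← sub_neg_eq_add]
  exact (Units.oneSub (-u) (by rwa [norm_neg])).ne_zero

lemma one_sub_conj_mul_ne_zero {c z : ℂ} (hc : ‖c‖ ≤ 1) (hz : ‖z‖ < 1) :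
    1 - conj c * z ≠ 0 :=
  (Units.oneSub (conj c * z) (by
    rw [norm_mul, norm_conj]
    exact mul_lt_one_of_nonneg_of_lt_one_right hc (norm_nonneg z) hz)).ne_zero

lemma norm_mobius_lt_one {c z : ℂ} (hc : ‖c‖ < 1) (hz : ‖z‖ < 1) : ‖mobius c z‖ < 1 := by
  have hd := one_sub_conj_mul_ne_zero hc.le hz
  rw [mobius, norm_div, div_lt_one (norm_pos_iff.mpr hd),
    ← sq_lt_sq₀ (norm_nonneg _) (norm_nonneg _), ← normSq_eq_norm_sq, ← normSq_eq_norm_sq]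
  have hgap : normSq (1 - conj c * z) - normSq (c - z) = (1 - normSq c) * (1 - normSq z) := by
    simp only [normSq_apply, sub_re, sub_im, mul_re, mul_im, one_re, one_im, conj_re, conj_im]
    ring
  have hc2 : normSq c < 1 := by rw [normSq_eq_norm_sq]; nlinarith [norm_nonneg c]
  have hz2 : normSq z < 1 := by rw [normSq_eq_norm_sq]; nlinarith [norm_nonneg z]
  nlinarith

lemma norm_conj_div_self_le_one (x : ℂ) : ‖conj x / x‖ ≤ 1 := by
  rw [norm_div, norm_conj]; exact div_self_le_one _

lemma Convex.ofReal_mul_add_one_sub_mul_mem {s : Set ℂ} (hs : Convex ℝ s) {x y : ℂ} (hx : x ∈ s)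
    (hy : y ∈ s) {t : ℝ} (ht0 : 0 ≤ t) (ht1 : t ≤ 1) : (t : ℂ) * x + (1 - t) * y ∈ s := by
  simpa [real_smul] using hs hx hy ht0 (sub_nonneg.2 ht1) (add_sub_cancel t 1)

lemma div_combination_eq {K : Type*} [Field K] {x y p q c t : K}
    (h : p - q + c * (x * p - y * q) = 0) (hD : 1 + c * ((1 - t) * x + t * y) ≠ 0)
    (hr : t * p + (1 - t) * q ≠ 0) :
    (t * x + (1 - t) * y + c * x * y) / (1 + c * ((1 - t) * x + t * y)) =
      (t * (x * p) + (1 - t) * (y * q)) / (t * p + (1 - t) * q) := by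
  rw [div_eq_div_iff hD hr]
  linear_combination (t * (1 - t) * (y - x)) * h

lemma div_combination_mobius_eq {α β z τ : ℂ} {t : ℝ} (hτ : τ * (α - β) = conj (α - β))
    (hα : 1 - conj α * z ≠ 0) (hβ : 1 - conj β * z ≠ 0)
    (hD : 1 + τ * z * ((1 - t) * mobius α z + t * mobius β z) ≠ 0)
    (hγ : 1 - conj (t * α + (1 - t) * β) * z ≠ 0) :
    (t * mobius α z + (1 - t) * mobius β z + τ * z * mobius α z * mobius β z) /
      (1 + τ * z * ((1 - t) * mobius α z + t * mobius β z)) = mobius (t * α + (1 - t) * β) z := by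
  have hαz : mobius α z * (1 - conj α * z) = α - z := div_mul_cancel₀ _ hα
  have hβz : mobius β z * (1 - conj β * z) = β - z := div_mul_cancel₀ _ hβ
  have hconj : conj (t * α + (1 - t) * β) = t * conj α + (1 - t) * conj β := by
    simp only [map_add, map_mul, map_sub, map_one, conj_ofReal]
  have hpq : (1 - conj α * z) - (1 - conj β * z) +
      τ * z * (mobius α z * (1 - conj α * z) - mobius β z * (1 - conj β * z)) = 0 := by
    rw [hαz, hβz]
    linear_combination z * (hτ.trans (map_sub _ _ _))
  have hr : t * (1 - conj α * z) + (1 - t) * (1 - conj β * z) ≠ 0 := by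
    convert hγ using 1
    rw [hconj]; ring
  rw [div_combination_eq hpq hD hr, hαz, hβz, mobius_apply, hconj]
  congr 1 <;> ring

theorem left_inverse_formula_general (α β : ℂ) (hα : α ∈ ball (0 : ℂ) 1) (hβ : β ∈ ball (0 : ℂ) 1)
    (t : ℝ) (ht0 : 0 < t) (ht1 : t < 1) (ω : ℂ) (hω : ‖ω‖ = 1)
    (τ γ : ℂ) (hτ : τ = (starRingEnd ℂ) (α - β) / (α - β))
    (hγ : γ = (t : ℂ) * α + (1 - t) * β)
    (F : ℂ × ℂ → ℂ)
    (hF : ∀ x : ℂ × ℂ, F x = ((t : ℂ) * (starRingEnd ℂ) ω * x.1 + (1 - t) * x.2 +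
      τ * (starRingEnd ℂ) ω * x.1 * x.2) /
      (1 + τ * ((1 - t) * (starRingEnd ℂ) ω * x.1 + (t : ℂ) * x.2)))
    (φ : ℂ → ℂ × ℂ)
    (hφ : ∀ z : ℂ, φ z = (ω * z * ((α - z) / (1 - (starRingEnd ℂ) α * z)),
      z * ((β - z) / (1 - (starRingEnd ℂ) β * z)))) :
    ∀ z ∈ ball (0 : ℂ) 1, F (φ z) = z * ((γ - z) / (1 - (starRingEnd ℂ) γ * z)) := by
  intro z hz
  rw [mem_ball_zero_iff] at hα hβ hz
  have hωω : conj ω * ω = 1 := by rw [conj_mul', hω]; simp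
  have hγ1 : ‖γ‖ < 1 := mem_ball_zero_iff.1 <|
    hγ ▸ (convex_ball (0 : ℂ) 1).ofReal_mul_add_one_sub_mul_mem
      (mem_ball_zero_iff.2 hα) (mem_ball_zero_iff.2 hβ) ht0.le ht1.le
  have hw : ‖(1 - t) * mobius α z + t * mobius β z‖ < 1 := by
    rw [add_comm, ← mem_ball_zero_iff]
    exact (convex_ball (0 : ℂ) 1).ofReal_mul_add_one_sub_mul_mem
      (mem_ball_zero_iff.2 (norm_mobius_lt_one hβ hz))
      (mem_ball_zero_iff.2 (norm_mobius_lt_one hα hz)) ht0.le ht1.le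
  have hD : 1 + τ * z * ((1 - t) * mobius α z + t * mobius β z) ≠ 0 := by
    refine one_add_ne_zero_of_norm_lt_one ?_
    rw [norm_mul, norm_mul]
    exact mul_lt_one_of_nonneg_of_lt_one_right
      (mul_le_one₀ (hτ ▸ norm_conj_div_self_le_one _) (norm_nonneg z) hz.le) (norm_nonneg _) hw
  rw [hF, hφ, ← mobius_apply, ← mobius_apply, ← mobius_apply, hγ,
    ← div_combination_mobius_eq (hτ ▸ div_mul_cancel_of_imp fun h ↦ by rw [h, map_zero])
      (one_sub_conj_mul_ne_zero hα.le hz) (one_sub_conj_mul_ne_zero hβ.le hz) hD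
      (hγ ▸ one_sub_conj_mul_ne_zero hγ1.le hz), ← mul_div_assoc]
  congr 1
  · linear_combination (t * z * mobius α z + τ * z ^ 2 * mobius α z * mobius β z) * hωω
  · linear_combination (τ * (1 - t) * z * mobius α z) * hωω

theorem left_inverse_formula (α β : ℂ) (hα : α ∈ ball (0 : ℂ) 1) (hβ : β ∈ ball (0 : ℂ) 1)
    (hαβ : α ≠ β) (t : ℝ) (ht0 : 0 < t) (ht1 : t < 1) (ω : ℂ) (hω : ‖ω‖ = 1)
    (τ γ : ℂ) (hτ : τ = (starRingEnd ℂ) (α - β) / (α - β))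
    (hγ : γ = (t : ℂ) * α + (1 - t) * β)
    (F : ℂ × ℂ → ℂ)
    (hF : ∀ x : ℂ × ℂ, F x = ((t : ℂ) * (starRingEnd ℂ) ω * x.1 + (1 - t) * x.2 +
      τ * (starRingEnd ℂ) ω * x.1 * x.2) /
      (1 + τ * ((1 - t) * (starRingEnd ℂ) ω * x.1 + (t : ℂ) * x.2)))
    (φ : ℂ → ℂ × ℂ)
    (hφ : ∀ z : ℂ, φ z = (ω * z * ((α - z) / (1 - (starRingEnd ℂ) α * z)),
      z * ((β - z) / (1 - (starRingEnd ℂ) β * z)))) :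
    ∀ z ∈ ball (0 : ℂ) 1, F (φ z) = z * ((γ - z) / (1 - (starRingEnd ℂ) γ * z)) :=
  left_inverse_formula_general α β hα hβ t ht0 ht1 ω hω τ γ hτ hγ F hF φ hφ
end

section
/- Let B₁, B₂ : 𝔻 → 𝔻 be finite Blaschke products of degree at most m-1, and suppose B₁(λⱼ) = B₂(λⱼ) at m pairwise distinct points λ₁,…,λ_m ∈ 𝔻. Then B₁ = B₂ identically on 𝔻. -/
open Complex Metric

/-- `B` is a finite Blaschke product of degree at most `d` (as a function on the unit disc). -/
def IsBlaschkeOfDegLE (d : ℕ) (B : ℂ → ℂ) : Prop :=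
  ∃ (n : ℕ) (ζ : ℂ) (a : Fin n → ℂ), n ≤ d ∧ ‖ζ‖ = 1 ∧
    (∀ k, a k ∈ ball (0 : ℂ) 1) ∧
    ∀ z ∈ ball (0 : ℂ) 1,
      B z = ζ * ∏ k, ((a k - z) / (1 - (starRingEnd ℂ) (a k) * z))

/-!
Clearing denominators, `B₁ = B₂` at `z` becomes `Q z = 0` for the polynomial
`Q = ζ₁ A₁ D₂ - ζ₂ A₂ D₁` of degree at most `2m - 2`, where `Aᵢ = ∏ (aₖ - X)` and
`Dᵢ = ∏ (1 - conj aₖ X)`. Since `|ζᵢ| = 1`, the reflection `z ↦ 1 / conj z` in the unit circle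
swaps `Aᵢ` and `Dᵢ` up to a common factor, so `Q` vanishes at `1 / conj z` whenever it vanishes at
`z ≠ 0`. The `m` points `λⱼ` together with the reflections of the nonzero ones are `2m - 1`
distinct roots of `Q`, hence `Q = 0`.
-/

open Polynomial ComplexConjugate

namespace Blaschke

variable {ι κ : Type*} [Fintype ι] [Fintype κ]

noncomputable def num (a : ι → ℂ) : ℂ[X] := ∏ k, (C (a k) - X)

noncomputable def den (a : ι → ℂ) : ℂ[X] := ∏ k, (1 - C (conj (a k)) * X)

@[simp]
lemma eval_num (a : ι → ℂ) (z : ℂ) : (num a).eval z = ∏ k, (a k - z) := by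
  simp [num, eval_prod]

@[simp]
lemma eval_den (a : ι → ℂ) (z : ℂ) : (den a).eval z = ∏ k, (1 - conj (a k) * z) := by
  simp [den, eval_prod]

lemma natDegree_num_le (a : ι → ℂ) : (num a).natDegree ≤ Fintype.card ι := by
  refine (natDegree_prod_le _ _).trans ((Finset.sum_le_card_nsmul _ _ 1 fun k _ => ?_).trans ?_)
  · exact (natDegree_sub_le _ _).trans (by simp)
  · simp

lemma natDegree_den_le (a : ι → ℂ) : (den a).natDegree ≤ Fintype.card ι := by
  refine (natDegree_prod_le _ _).trans ((Finset.sum_le_card_nsmul _ _ 1 fun k _ => ?_).trans ?_)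
  · exact (natDegree_sub_le _ _).trans (max_le (by simp) (natDegree_mul_le.trans (by simp)))
  · simp

lemma one_sub_conj_mul_ne_zero {c z : ℂ} (hc : c ∈ ball (0 : ℂ) 1) (hz : z ∈ ball (0 : ℂ) 1) :
    1 - conj c * z ≠ 0 := by
  rw [mem_ball_zero_iff] at hc hz
  refine sub_ne_zero.2 fun h => ?_
  have : ‖c‖ * ‖z‖ = 1 := by rw [← norm_conj c, ← norm_mul, ← h, norm_one]
  nlinarith [norm_nonneg c, norm_nonneg z]

lemma eval_den_ne_zero {a : ι → ℂ} (ha : ∀ k, a k ∈ ball (0 : ℂ) 1) {z : ℂ}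
    (hz : z ∈ ball (0 : ℂ) 1) : (den a).eval z ≠ 0 := by
  simpa [Finset.prod_ne_zero_iff] using fun k => one_sub_conj_mul_ne_zero (ha k) hz

lemma eval_num_inv_conj (a : ι → ℂ) {z : ℂ} (hz : z ≠ 0) :
    (num a).eval (conj z)⁻¹ = (-(conj z)⁻¹) ^ Fintype.card ι * conj ((den a).eval z) := by
  rw [eval_num, eval_den, map_prod, ← Finset.card_univ, ← Finset.prod_const,
    ← Finset.prod_mul_distrib]
  refine Finset.prod_congr rfl fun k _ => ?_
  have : conj z ≠ 0 := (_root_.map_ne_zero _).2 hz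
  simp only [map_sub, map_one, map_mul, conj_conj]
  field_simp
  ring

lemma eval_den_inv_conj (a : ι → ℂ) {z : ℂ} (hz : z ≠ 0) :
    (den a).eval (conj z)⁻¹ = (-(conj z)⁻¹) ^ Fintype.card ι * conj ((num a).eval z) := by
  rw [eval_num, eval_den, map_prod, ← Finset.card_univ, ← Finset.prod_const,
    ← Finset.prod_mul_distrib]
  refine Finset.prod_congr rfl fun k _ => ?_
  have : conj z ≠ 0 := (_root_.map_ne_zero _).2 hz
  simp only [map_sub]
  field_simp
  ring

noncomputable def cross (ζ₁ : ℂ) (a : ι → ℂ) (ζ₂ : ℂ) (b : κ → ℂ) : ℂ[X] :=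
  C ζ₁ * num a * den b - C ζ₂ * num b * den a

lemma natDegree_cross_le (ζ₁ : ℂ) (a : ι → ℂ) (ζ₂ : ℂ) (b : κ → ℂ) :
    (cross ζ₁ a ζ₂ b).natDegree ≤ Fintype.card ι + Fintype.card κ := by
  refine (natDegree_sub_le _ _).trans (max_le ?_ ?_)
  · refine natDegree_mul_le.trans (add_le_add ?_ (natDegree_den_le b))
    exact natDegree_C_mul_le _ _ |>.trans (natDegree_num_le a)
  · refine natDegree_mul_le.trans ((add_le_add ?_ (natDegree_den_le a)).trans (add_comm _ _).le)
    exact natDegree_C_mul_le _ _ |>.trans (natDegree_num_le b)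

lemma eval_cross_eq_zero_iff {ζ₁ ζ₂ : ℂ} {a : ι → ℂ} {b : κ → ℂ}
    (ha : ∀ k, a k ∈ ball (0 : ℂ) 1) (hb : ∀ k, b k ∈ ball (0 : ℂ) 1) {z : ℂ}
    (hz : z ∈ ball (0 : ℂ) 1) :
    (cross ζ₁ a ζ₂ b).eval z = 0 ↔
      ζ₁ * ∏ k, ((a k - z) / (1 - conj (a k) * z)) =
        ζ₂ * ∏ k, ((b k - z) / (1 - conj (b k) * z)) := by
  have hDa := eval_den_ne_zero ha hz
  have hDb := eval_den_ne_zero hb hz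
  simp only [eval_den] at hDa hDb
  rw [Finset.prod_div_distrib, Finset.prod_div_distrib, ← mul_div_assoc, ← mul_div_assoc,
    div_eq_div_iff hDa hDb, cross]
  simp only [eval_sub, eval_mul, eval_C, eval_num, eval_den, sub_eq_zero]

lemma eval_cross_inv_conj {ζ₁ ζ₂ : ℂ} (hζ₁ : ‖ζ₁‖ = 1) (hζ₂ : ‖ζ₂‖ = 1) (a : ι → ℂ) (b : κ → ℂ)
    {z : ℂ} (hz : z ≠ 0) :
    (cross ζ₁ a ζ₂ b).eval (conj z)⁻¹ =
      -(ζ₁ * ζ₂) * (-(conj z)⁻¹) ^ (Fintype.card ι + Fintype.card κ) *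
        conj ((cross ζ₁ a ζ₂ b).eval z) := by
  have hu₁ : ζ₁ * conj ζ₁ = 1 := by rw [mul_conj, normSq_eq_norm_sq, hζ₁]; norm_num
  have hu₂ : ζ₂ * conj ζ₂ = 1 := by rw [mul_conj, normSq_eq_norm_sq, hζ₂]; norm_num
  simp only [cross, eval_sub, eval_mul, eval_C, eval_num_inv_conj _ hz, eval_den_inv_conj _ hz,
    map_sub, map_mul, pow_add]
  linear_combination
    (-(conj z)⁻¹) ^ Fintype.card ι * (-(conj z)⁻¹) ^ Fintype.card κ *
      (ζ₂ * conj ((num a).eval z) * conj ((den b).eval z) * hu₁ -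
        ζ₁ * conj ((num b).eval z) * conj ((den a).eval z) * hu₂)

end Blaschke

lemma two_mul_card_le_succ_card_union_image_inv_conj {S : Finset ℂ}
    (hS : ∀ z ∈ S, z ∈ ball (0 : ℂ) 1) :
    2 * S.card ≤ (S ∪ (S.erase 0).image fun z => (conj z)⁻¹).card + 1 := by
  have hdisj : Disjoint S ((S.erase 0).image fun z => (conj z)⁻¹) := by
    refine Finset.disjoint_left.2 fun w hwS hw => ?_
    obtain ⟨z, hz, rfl⟩ := Finset.mem_image.1 hw
    obtain ⟨hz0, hzS⟩ := Finset.mem_erase.1 hz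
    have h₁ := mem_ball_zero_iff.1 (hS _ hwS)
    have h₂ := mem_ball_zero_iff.1 (hS _ hzS)
    rw [norm_inv, norm_conj] at h₁
    have := (one_lt_inv₀ (norm_pos_iff.2 hz0)).2 h₂
    linarith
  have hinj : Function.Injective fun z : ℂ => (conj z)⁻¹ :=
    inv_injective.comp (RingHom.injective _)
  rw [Finset.card_union_of_disjoint hdisj, Finset.card_image_of_injective _ hinj]
  have := Finset.pred_card_le_card_erase (s := S) (a := 0)
  omega

theorem blaschke_uniqueness (m : ℕ) (hm : 1 ≤ m) (B₁ B₂ : ℂ → ℂ)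
    (hB₁ : IsBlaschkeOfDegLE (m - 1) B₁) (hB₂ : IsBlaschkeOfDegLE (m - 1) B₂)
    (lam : Fin m → ℂ) (hlam : ∀ j, lam j ∈ ball (0 : ℂ) 1)
    (hinj : Function.Injective lam)
    (heq : ∀ j, B₁ (lam j) = B₂ (lam j)) :
    ∀ z ∈ ball (0 : ℂ) 1, B₁ z = B₂ z := by
  obtain ⟨n₁, ζ₁, a, hn₁, hζ₁, ha, hB₁⟩ := hB₁
  obtain ⟨n₂, ζ₂, b, hn₂, hζ₂, hb, hB₂⟩ := hB₂
  set Q := Blaschke.cross ζ₁ a ζ₂ b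
  have hQ : ∀ z ∈ ball (0 : ℂ) 1, Q.eval z = 0 ↔ B₁ z = B₂ z := fun z hz => by
    rw [hB₁ z hz, hB₂ z hz, Blaschke.eval_cross_eq_zero_iff ha hb hz]
  set S := Finset.univ.image lam
  have hS : ∀ z ∈ S, z ∈ ball (0 : ℂ) 1 := by simpa [S] using hlam
  have hQS : ∀ z ∈ S, Q.eval z = 0 := by simpa [S, hQ _ (hlam _)] using heq
  have hQ_zero : Q = 0 := by
    refine eq_zero_of_natDegree_lt_card_of_eval_eq_zero' Q
      (S ∪ (S.erase 0).image fun z => (conj z)⁻¹) (fun w hw => ?_) ?_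
    · rcases Finset.mem_union.1 hw with hw | hw
      · exact hQS w hw
      obtain ⟨z, hz, rfl⟩ := Finset.mem_image.1 hw
      obtain ⟨hz0, hzS⟩ := Finset.mem_erase.1 hz
      simp [Q, Blaschke.eval_cross_inv_conj hζ₁ hζ₂ a b hz0, hQS z hzS]
    · have hcard := two_mul_card_le_succ_card_union_image_inv_conj hS
      have hSm : S.card = m := by simp [S, Finset.card_image_of_injective _ hinj]
      refine (Blaschke.natDegree_cross_le ζ₁ a ζ₂ b).trans_lt ?_
      simp only [Fintype.card_fin]
      omega
  exact fun z hz => (hQ z hz).1 (by simp [hQ_zero])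
end

section
/- Fix t ∈ (0,1), ω ∈ ℂ with |ω|=1, and τ ∈ ℂ with |τ|=1. The function F(x₁,x₂) = (t·conj(ω)x₁ + (1-t)x₂ + τ·conj(ω)x₁x₂)/(1 + τ((1-t)·conj(ω)x₁ + t·x₂)) is a well-defined holomorphic map from 𝔻² to the closed unit disc with |F(x)| < 1 for x ∈ 𝔻²; moreover F(0,0) = 0. -/
/-!
Write `u = conj ω * x₁`, `v = x₂`, so that the numerator is `N = t u + (1 - t) v + τ u v` and the
denominator is `D = 1 + τ ((1 - t) u + t v)`. For `|τ| = 1` one has the identity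
`|D|² - |N|² = (1 - t)(1 - |v|²)|1 + τ u|² + t (1 - |u|²)|1 + τ v|²`,
whose right-hand side is positive on the bidisc for `0 ≤ t ≤ 1`. Hence `|N| < |D|`, which gives both
`D ≠ 0` and `|F| < 1`.
-/

open Complex ComplexConjugate Metric

lemma normSq_denominator_sub_normSq_numerator (t : ℝ) (τ u v : ℂ) (hτ : normSq τ = 1) :
    normSq (1 + τ * ((1 - t) * u + t * v)) - normSq (t * u + (1 - t) * v + τ * u * v) =
      (1 - t) * (1 - normSq v) * normSq (1 + τ * u) +
        t * (1 - normSq u) * normSq (1 + τ * v) := by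
  have hττ : τ * conj τ = 1 := by rw [mul_conj, hτ, ofReal_one]
  apply ofReal_injective
  push_cast
  simp only [← mul_conj, map_add, map_mul, map_sub, map_one, conj_ofReal]
  -- the coefficient of `τ * conj τ` in the difference of the two sides
  linear_combination
    (((1 - t) * u + t * v) * ((1 - t) * conj u + t * conj v) - u * conj u * v * conj v -
      (1 - t) * (1 - v * conj v) * (u * conj u) - t * (1 - u * conj u) * (v * conj v)) * hττ

lemma normSq_one_add_pos {z : ℂ} (hz : ‖z‖ < 1) : 0 < normSq (1 + z) :=
  normSq_pos.2 fun h => by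
    rw [eq_neg_of_add_eq_zero_right h, norm_neg, norm_one] at hz
    exact lt_irrefl _ hz

lemma norm_numerator_lt_norm_denominator {t : ℝ} (ht0 : 0 ≤ t) (ht1 : t ≤ 1) {τ u v : ℂ}
    (hτ : ‖τ‖ = 1) (hu : ‖u‖ < 1) (hv : ‖v‖ < 1) :
    ‖(t : ℂ) * u + (1 - t) * v + τ * u * v‖ < ‖1 + τ * ((1 - t) * u + t * v)‖ := by
  have hτ' : normSq τ = 1 := by rw [normSq_eq_norm_sq, hτ, one_pow]
  have hu' : normSq u < 1 := by rw [normSq_eq_norm_sq]; nlinarith [norm_nonneg u]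
  have hv' : normSq v < 1 := by rw [normSq_eq_norm_sq]; nlinarith [norm_nonneg v]
  have hτu := normSq_one_add_pos (by rwa [norm_mul, hτ, one_mul] : ‖τ * u‖ < 1)
  have hτv := normSq_one_add_pos (by rwa [norm_mul, hτ, one_mul] : ‖τ * v‖ < 1)
  have hpos : 0 < (1 - t) * (1 - normSq v) * normSq (1 + τ * u) +
      t * (1 - normSq u) * normSq (1 + τ * v) := by
    have hp : 0 < (1 - normSq v) * normSq (1 + τ * u) := by nlinarith
    have hq : 0 < (1 - normSq u) * normSq (1 + τ * v) := by nlinarith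
    rcases ht1.lt_or_eq with ht1 | rfl
    · nlinarith
    · linarith
  rw [← normSq_denominator_sub_normSq_numerator t τ u v hτ', sub_pos, normSq_eq_norm_sq,
    normSq_eq_norm_sq] at hpos
  exact lt_of_pow_lt_pow_left₀ 2 (norm_nonneg _) hpos

theorem F_well_defined (t : ℝ) (ht0 : 0 < t) (ht1 : t < 1) (ω τ : ℂ)
    (hω : ‖ω‖ = 1) (hτ : ‖τ‖ = 1)
    (F : ℂ × ℂ → ℂ)
    (hF : ∀ x : ℂ × ℂ, F x = ((t : ℂ) * (starRingEnd ℂ) ω * x.1 + (1 - t) * x.2 +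
      τ * (starRingEnd ℂ) ω * x.1 * x.2) /
      (1 + τ * ((1 - t) * (starRingEnd ℂ) ω * x.1 + (t : ℂ) * x.2))) :
    (∀ x ∈ ball (0 : ℂ) 1 ×ˢ ball (0 : ℂ) 1,
        1 + τ * ((1 - t) * (starRingEnd ℂ) ω * x.1 + (t : ℂ) * x.2) ≠ 0) ∧
    DifferentiableOn ℂ F (ball (0 : ℂ) 1 ×ˢ ball (0 : ℂ) 1) ∧
    (∀ x ∈ ball (0 : ℂ) 1 ×ˢ ball (0 : ℂ) 1, ‖F x‖ < 1) ∧
    F (0, 0) = 0 := by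
  have hlt : ∀ x ∈ ball (0 : ℂ) 1 ×ˢ ball (0 : ℂ) 1,
      ‖(t : ℂ) * conj ω * x.1 + (1 - t) * x.2 + τ * conj ω * x.1 * x.2‖ <
        ‖1 + τ * ((1 - t) * conj ω * x.1 + t * x.2)‖ := by
    rintro x ⟨hx₁, hx₂⟩
    rw [mem_ball_zero_iff] at hx₁ hx₂
    have hu : ‖conj ω * x.1‖ < 1 := by rwa [norm_mul, norm_conj, hω, one_mul]
    convert norm_numerator_lt_norm_denominator ht0.le ht1.le hτ hu hx₂ using 2 <;> ring
  have hden : ∀ x ∈ ball (0 : ℂ) 1 ×ˢ ball (0 : ℂ) 1,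
      1 + τ * ((1 - t) * conj ω * x.1 + t * x.2) ≠ 0 := fun x hx =>
    norm_pos_iff.1 ((norm_nonneg _).trans_lt (hlt x hx))
  refine ⟨hden, ?_, fun x hx => ?_, by simp [hF]⟩
  · simp_rw [funext hF, div_eq_mul_inv]
    exact DifferentiableOn.mul (by fun_prop) (DifferentiableOn.inv (by fun_prop) hden)
  · rw [hF, norm_div, div_lt_one (norm_pos_iff.2 (hden x hx))]
    exact hlt x hx
end

section
/- Let z₁, z₂, w₁, w₂, l ∈ ℂ with z₁ ≠ z₂, w₁ ≠ w₂, l ≠ 0, and let N be the 2×2 matrix with rows ((1-z₂/l)/(z₁-z₂), (z₁-l)/(z₁-z₂)) and ((1-w₂/l)/(w₁-w₂), (w₁-l)/(w₁-w₂)), and M the 2×2 matrix with rows (z₂(1-z₁/l)/(z₂-z₁), z₁(z₂-l)/(z₂-z₁)) and (w₂(1-w₁/l)/(w₂-w₁), w₁(w₂-l)/(w₂-w₁)). If additionally z₁ ≠ w₁, z₂ ≠ w₂, and not both (1-z₂/l)(w₁-l) = 0 and (1-w₂/l)(z₁-l) = 0, then at least one of det M, det N is nonzero. -/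
open Matrix

theorem det_M_or_det_N_nonzero (z1 z2 w1 w2 l : ℂ)
    (hz : z1 ≠ z2) (hw : w1 ≠ w2) (hl : l ≠ 0)
    (hzw1 : z1 ≠ w1) (hzw2 : z2 ≠ w2)
    (hnotboth : ¬ ((1 - z2 / l) * (w1 - l) = 0 ∧ (1 - w2 / l) * (z1 - l) = 0))
    (M N : Matrix (Fin 2) (Fin 2) ℂ)
    (hM : M = !![z2 * (1 - z1 / l) / (z2 - z1), z1 * (z2 - l) / (z2 - z1);
                 w2 * (1 - w1 / l) / (w2 - w1), w1 * (w2 - l) / (w2 - w1)])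
    (hN : N = !![(1 - z2 / l) / (z1 - z2), (z1 - l) / (z1 - z2);
                 (1 - w2 / l) / (w1 - w2), (w1 - l) / (w1 - w2)]) :
    M.det ≠ 0 ∨ N.det ≠ 0 := by
  by_contra h
  push_neg at h
  obtain ⟨hM0, hN0⟩ := h
  have hz' : z2 - z1 ≠ 0 := sub_ne_zero.mpr (Ne.symm hz)
  have hz'' : z1 - z2 ≠ 0 := sub_ne_zero.mpr hz
  have hw' : w2 - w1 ≠ 0 := sub_ne_zero.mpr (Ne.symm hw)
  have hw'' : w1 - w2 ≠ 0 := sub_ne_zero.mpr hw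
  rw [hM, Matrix.det_fin_two_of] at hM0
  rw [hN, Matrix.det_fin_two_of] at hN0
  field_simp at hM0 hN0
  have facN : l * (z1 - z2) * (w1 - w2) ≠ 0 :=
    mul_ne_zero (mul_ne_zero hl hz'') hw''
  have facM : l * (z2 - z1) * (w2 - w1) ≠ 0 :=
    mul_ne_zero (mul_ne_zero hl hz') hw'
  have eqN : (l - z2) * (w1 - l) = (l - w2) * (z1 - l) := by
    have h1 : ((l - z2) * (w1 - l) - (l - w2) * (z1 - l)) * (l * (z1 - z2) * (w1 - w2)) = 0 := by
      linear_combination (l * (z1 - z2) * (w1 - w2)) * hN0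
    rcases mul_eq_zero.mp h1 with h2 | h2
    · exact sub_eq_zero.mp h2
    · exact absurd h2 facN
  have eqM : z2 * (l - z1) * (w1 * (w2 - l)) = w2 * (l - w1) * (z1 * (z2 - l)) := by
    have h1 : (z2 * (l - z1) * (w1 * (w2 - l)) - w2 * (l - w1) * (z1 * (z2 - l))) *
        (l * (z2 - z1) * (w2 - w1)) = 0 := by
      linear_combination (l * (z2 - z1) * (w2 - w1)) * hM0
    rcases mul_eq_zero.mp h1 with h2 | h2
    · exact sub_eq_zero.mp h2
    · exact absurd h2 facM
  have hcne : (l - z2) * (w1 - l) ≠ 0 := by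
    intro h0
    apply hnotboth
    constructor
    · have h1 : (1 - z2 / l) * (w1 - l) = (l - z2) * (w1 - l) / l := by
        field_simp
      rw [h1, h0, zero_div]
    · have h1 : (1 - w2 / l) * (z1 - l) = (l - w2) * (z1 - l) / l := by
        field_simp
      rw [h1, ← eqN, h0, zero_div]
  have key : z2 * w1 * ((l - z2) * (w1 - l)) = z1 * w2 * ((l - z2) * (w1 - l)) := by
    linear_combination eqM + z2 * w1 * eqN
  have hp : z2 * w1 = z1 * w2 := mul_right_cancel₀ hcne key
  have hs : l * (w1 + z2 - z1 - w2) = 0 := by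
    linear_combination eqN + hp
  have hs' : w1 + z2 - z1 - w2 = 0 := by
    rcases mul_eq_zero.mp hs with h | h
    · exact absurd h hl
    · exact h
  have hfin : (z2 - z1) * (z2 - w2) = 0 := by
    linear_combination z2 * hs' - hp
  rcases mul_eq_zero.mp hfin with h | h
  · exact hz' h
  · exact (sub_ne_zero.mpr hzw2) h
end

section
/- Suppose Ψ(α,β,c) = (z₁,w₁,z₂,w₂) where Ψ(α,β,c) = (c·m_α(c), (l/c)·m_α(l/c), c·m_β(c), (l/c)·m_β(l/c)), l ≠ 0, z₁ ≠ z₂. Then α and its conjugate satisfy the linear relations α = c·z₂(1-z₁/l)/(z₂-z₁) + (1/c)·z₁(z₂-l)/(z₂-z₁) and conj(α) = c·(1-z₂/l)/(z₁-z₂) + (1/c)·(z₁-l)/(z₁-z₂). -/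
/-!
After clearing denominators, the equations defining `z1` and `z2` are linear in `α` and `conj α`
once these are treated as independent unknowns: `c α + c z1 conj α = z1 + c²` and the same with
`(z2, l / c)` in place of `(z1, c)`. The determinant of this system is `l (z2 - z1) ≠ 0`, and
Cramer's rule gives the stated formulas. The denominators `1 - conj α ζ` do not vanish since
`α` and `ζ` lie in the unit disc.
-/

open Complex Metric

lemma one_sub_conj_mul_ne_zero_s18 {a z : ℂ} (ha : a ∈ ball (0 : ℂ) 1) (hz : z ∈ ball (0 : ℂ) 1) :
    1 - starRingEnd ℂ a * z ≠ 0 := by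
  rw [mem_ball_zero_iff] at ha hz
  have hlt : ‖starRingEnd ℂ a * z‖ < 1 := by
    rw [norm_mul, Complex.norm_conj]
    exact mul_lt_one_of_nonneg_of_lt_one_left (norm_nonneg a) ha hz.le
  intro h
  rw [← sub_eq_zero.mp h, norm_one] at hlt
  exact hlt.false

lemma eq_of_blaschke_relations {K : Type*} [Field K] {l c a b z1 z2 : K}
    (hl : l ≠ 0) (hc : c ≠ 0) (hne : z1 ≠ z2)
    (h1 : z1 * (1 - b * c) = c * (a - c))
    (h2 : z2 * (1 - b * (l / c)) = l / c * (a - l / c)) :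
    a = c * (z2 * (1 - z1 / l) / (z2 - z1)) + (1 / c) * (z1 * (z2 - l) / (z2 - z1)) ∧
    b = c * ((1 - z2 / l) / (z1 - z2)) + (1 / c) * ((z1 - l) / (z1 - z2)) := by
  have h2_cleared : z2 * (c * c - b * l * c) = l * (c * a - l) := by
    field_simp at h2
    linear_combination h2
  have h21 : z2 - z1 ≠ 0 := sub_ne_zero.mpr hne.symm
  have h12 : z1 - z2 ≠ 0 := sub_ne_zero.mpr hne
  constructor
  · field_simp
    linear_combination z1 * h2_cleared - z2 * l * h1
  · field_simp
    linear_combination h2_cleared - l * h1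

theorem alpha_linear_relations (l : ℂ) (hl : l ≠ 0) (α c z1 z2 : ℂ)
    (hα : α ∈ ball (0 : ℂ) 1) (hc : c ∈ ball (0 : ℂ) 1) (hc0 : c ≠ 0)
    (hlc : l / c ∈ ball (0 : ℂ) 1)
    (hz1 : z1 = c * ((α - c) / (1 - (starRingEnd ℂ) α * c)))
    (hz2 : z2 = (l / c) * ((α - l / c) / (1 - (starRingEnd ℂ) α * (l / c))))
    (hne : z1 ≠ z2) :
    α = c * (z2 * (1 - z1 / l) / (z2 - z1)) + (1 / c) * (z1 * (z2 - l) / (z2 - z1)) ∧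
    (starRingEnd ℂ) α = c * ((1 - z2 / l) / (z1 - z2)) + (1 / c) * ((z1 - l) / (z1 - z2)) := by
  refine eq_of_blaschke_relations hl hc0 hne ?_ ?_
  · rw [hz1, mul_assoc, div_mul_cancel₀ _ (one_sub_conj_mul_ne_zero_s18 hα hc)]
  · rw [hz2, mul_assoc, div_mul_cancel₀ _ (one_sub_conj_mul_ne_zero_s18 hα hlc)]
end

section
/- The set B = {λ ∈ 𝔻 × 𝔻* × 𝔻 × 𝔻* : m(λ₁,λ₃) < m(λ₂,λ₄)} is path-connected, where 𝔻* = 𝔻∖{0} and m is the Möbius distance on 𝔻. -/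
/-!
Scaling `λ₁, λ₃` by `t ∈ [0, 1]` does not increase `m(λ₁, λ₃)`, because
`‖1 - t²k‖² - t²‖1 - k‖² = (1 - t²)(1 - t²‖k‖²) ≥ 0` for `k = conj λ₁ λ₃`. So every point of `B`
is joined inside `B` to `(0, λ₂, 0, λ₄)`, and these points form the path-connected set of pairs of
distinct points of `𝔻*`: each fibre `𝔻 ∖ {0, λ₂}` is a disc minus finitely many points, and
`λ₂ ↦ -λ₂` is a continuous section.
-/

open Complex Metric ComplexConjugate

section PathConnected

variable {X Y : Type*} [TopologicalSpace X] [TopologicalSpace Y]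

theorem IsPathConnected.of_subset_of_forall_joinedIn {s t : Set X} (hs : IsPathConnected s)
    (hst : s ⊆ t) (h : ∀ x ∈ t, ∃ y ∈ s, JoinedIn t x y) : IsPathConnected t := by
  obtain ⟨x₀, hx₀, hs⟩ := hs
  refine ⟨x₀, hst hx₀, fun {x} hx ↦ ?_⟩
  obtain ⟨y, hy, hxy⟩ := h x hx
  exact ((hs hy).mono hst).trans hxy.symm

theorem IsPathConnected.setOf_mem_fiber {S : Set X} {F : X → Set Y} (hS : IsPathConnected S)
    (hF : ∀ x ∈ S, IsPathConnected (F x)) {g : X → Y} (hg : Continuous g)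
    (hgF : ∀ x ∈ S, g x ∈ F x) : IsPathConnected {p : X × Y | p.1 ∈ S ∧ p.2 ∈ F p.1} := by
  refine (hS.image (continuous_id.prodMk hg)).of_subset_of_forall_joinedIn ?_ ?_
  · rintro _ ⟨x, hx, rfl⟩
    exact ⟨hx, hgF x hx⟩
  · rintro ⟨x, y⟩ ⟨hx, hy⟩
    refine ⟨(x, g x), ⟨x, hx, rfl⟩, ?_⟩
    refine (((hF x hx).joinedIn y hy (g x) (hgF x hx)).map (continuous_const.prodMk
      continuous_id)).mono ?_
    rintro _ ⟨z, hz, rfl⟩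
    exact ⟨hx, hz⟩

end PathConnected

theorem isPathConnected_unitBall_diff_countable {E : Type*} [NormedAddCommGroup E]
    [NormedSpace ℝ E] (hE : 1 < Module.rank ℝ E) {K : Set E} (hK : K.Countable) :
    IsPathConnected (ball (0 : E) 1 \ K) := by
  let f : E → E := (↑) ∘ Homeomorph.unitBall
  have hf : Continuous f := continuous_subtype_val.comp Homeomorph.unitBall.continuous
  have hrange : Set.range f = ball 0 1 :=
    (Homeomorph.unitBall.surjective.range_comp _).trans Subtype.range_coe
  have := ((hK.preimage (Subtype.val_injective.comp Homeomorph.unitBall.injective)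
    ).isPathConnected_compl_of_one_lt_rank hE).image hf
  rwa [← Set.preimage_compl, Set.image_preimage_eq_inter_range, hrange, Set.inter_comm,
    ← Set.sdiff_eq] at this

noncomputable def mobiusDist (z w : ℂ) : ℝ := ‖z - w‖ / ‖1 - conj z * w‖

theorem mobiusDist_self (z : ℂ) : mobiusDist z z = 0 := by simp [mobiusDist]

theorem mobiusDist_nonneg (z w : ℂ) : 0 ≤ mobiusDist z w := by unfold mobiusDist; positivity

theorem norm_conj_mul_lt_one {z w : ℂ} (hz : z ∈ ball (0 : ℂ) 1) (hw : w ∈ ball (0 : ℂ) 1) :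
    ‖conj z * w‖ < 1 := by
  rw [mem_ball_zero_iff] at hz hw
  rw [norm_mul, norm_conj]
  exact mul_lt_one_of_nonneg_of_lt_one_left (norm_nonneg z) hz hw.le

theorem norm_one_sub_pos {k : ℂ} (hk : ‖k‖ < 1) : 0 < ‖1 - k‖ := by
  refine norm_pos_iff.2 (sub_ne_zero.2 fun h ↦ ?_)
  simp [← h] at hk

theorem mobiusDist_pos {z w : ℂ} (hz : z ∈ ball (0 : ℂ) 1) (hw : w ∈ ball (0 : ℂ) 1)
    (h : z ≠ w) : 0 < mobiusDist z w :=
  div_pos (norm_pos_iff.2 (sub_ne_zero.2 h)) (norm_one_sub_pos (norm_conj_mul_lt_one hz hw))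

theorem norm_one_sub_ofReal_sq_mul_sq (t : ℝ) (k : ℂ) :
    ‖1 - (t : ℂ) ^ 2 * k‖ ^ 2 = t ^ 2 * ‖1 - k‖ ^ 2 + (1 - t ^ 2) * (1 - t ^ 2 * ‖k‖ ^ 2) := by
  simp only [← ofReal_pow, Complex.sq_norm, normSq_apply, sub_re, sub_im, one_re, one_im, mul_re,
    mul_im, ofReal_re, ofReal_im]
  ring

theorem mul_norm_one_sub_le {t : ℝ} (ht₀ : 0 ≤ t) (ht₁ : t ≤ 1) {k : ℂ} (hk : ‖k‖ ≤ 1) :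
    t * ‖1 - k‖ ≤ ‖1 - (t : ℂ) ^ 2 * k‖ := by
  have h₁ : 0 ≤ 1 - t ^ 2 := by nlinarith
  have h₂ : 0 ≤ 1 - t ^ 2 * ‖k‖ ^ 2 := by
    nlinarith [pow_le_one₀ (norm_nonneg k) hk (n := 2), pow_le_one₀ ht₀ ht₁ (n := 2)]
  rw [← pow_le_pow_iff_left₀ (by positivity) (norm_nonneg _) two_ne_zero,
    norm_one_sub_ofReal_sq_mul_sq, mul_pow]
  nlinarith [mul_nonneg h₁ h₂]

theorem mobiusDist_smul_le {a c : ℂ} (ha : a ∈ ball (0 : ℂ) 1) (hc : c ∈ ball (0 : ℂ) 1)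
    {t : ℝ} (ht₀ : 0 ≤ t) (ht₁ : t ≤ 1) : mobiusDist (t • a) (t • c) ≤ mobiusDist a c := by
  have hk := norm_conj_mul_lt_one ha hc
  have hscale : conj ((t : ℂ) * a) * ((t : ℂ) * c) = (t : ℂ) ^ 2 * (conj a * c) := by
    rw [map_mul, conj_ofReal]; ring
  have htk : ‖(t : ℂ) ^ 2 * (conj a * c)‖ < 1 := by
    rw [norm_mul, norm_pow, norm_real, Real.norm_of_nonneg ht₀]
    exact mul_lt_one_of_nonneg_of_lt_one_right (pow_le_one₀ ht₀ ht₁) (norm_nonneg _) hk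
  rw [mobiusDist, mobiusDist, real_smul, real_smul, hscale, ← mul_sub, norm_mul, norm_real,
    Real.norm_of_nonneg ht₀, div_le_div_iff₀ (norm_one_sub_pos htk) (norm_one_sub_pos hk)]
  have := mul_le_mul_of_nonneg_left (mul_norm_one_sub_le ht₀ ht₁ hk.le) (norm_nonneg (a - c))
  linarith

theorem isPathConnected_punctured_disc_distinct_pairs :
    IsPathConnected {p : ℂ × ℂ | p.1 ∈ ball (0 : ℂ) 1 \ {0} ∧ p.2 ∈ ball (0 : ℂ) 1 \ {0, p.1}} := by
  have hℂ : 1 < Module.rank ℝ ℂ := by simp [rank_real_complex]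
  refine (isPathConnected_unitBall_diff_countable hℂ (Set.countable_singleton 0)).setOf_mem_fiber
    (fun b _ ↦ isPathConnected_unitBall_diff_countable hℂ ((Set.countable_singleton b).insert 0))
    continuous_neg ?_
  rintro b ⟨hb, hb0 : b ≠ 0⟩
  refine ⟨by rwa [mem_ball_zero_iff, norm_neg, ← mem_ball_zero_iff], ?_⟩
  rintro (h | (h : -b = b))
  · exact hb0 (neg_eq_zero.1 h)
  · exact hb0 (by linear_combination (-1 / 2 : ℂ) * h)

/-- The set `B` of the paper. -/
def mobiusLtSet : Set (ℂ × ℂ × ℂ × ℂ) :=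
  {x | x.1 ∈ ball (0 : ℂ) 1 ∧ x.2.1 ∈ ball (0 : ℂ) 1 \ {0} ∧ x.2.2.1 ∈ ball (0 : ℂ) 1 ∧
    x.2.2.2 ∈ ball (0 : ℂ) 1 \ {0} ∧ mobiusDist x.1 x.2.2.1 < mobiusDist x.2.1 x.2.2.2}

theorem mk_zero_mem_mobiusLtSet {b d : ℂ} (hb : b ∈ ball (0 : ℂ) 1 \ {0})
    (hd : d ∈ ball (0 : ℂ) 1 \ {0, b}) : ((0 : ℂ), b, (0 : ℂ), d) ∈ mobiusLtSet := by
  have hdb : d ≠ b := fun h ↦ hd.2 (Or.inr h)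
  refine ⟨mem_ball_self one_pos, hb, mem_ball_self one_pos, ⟨hd.1, fun h ↦ hd.2 (Or.inl h)⟩, ?_⟩
  rw [mobiusDist_self]
  exact mobiusDist_pos hb.1 hd.1 hdb.symm

theorem joinedIn_mobiusLtSet_zero_zero {a b c d : ℂ} (h : (a, b, c, d) ∈ mobiusLtSet) :
    JoinedIn mobiusLtSet ((0 : ℂ), b, (0 : ℂ), d) (a, b, c, d) := by
  obtain ⟨ha, hb, hc, hd, hlt⟩ := h
  refine JoinedIn.ofLine (f := fun t : ℝ ↦ (t • a, b, t • c, d)) (by fun_prop) (by simp) (by simp)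
    ?_
  rintro _ ⟨t, ⟨ht₀, ht₁⟩, rfl⟩
  have hdisc : StarConvex ℝ 0 (ball (0 : ℂ) 1) :=
    (convex_ball 0 1).starConvex (mem_ball_self one_pos)
  exact ⟨hdisc.smul_mem ha ht₀ ht₁, hb, hdisc.smul_mem hc ht₀ ht₁, hd,
    (mobiusDist_smul_le ha hc ht₀ ht₁).trans_lt hlt⟩

theorem B_path_connected :
    IsPathConnected {x : ℂ × ℂ × ℂ × ℂ |
      x.1 ∈ ball (0 : ℂ) 1 ∧ x.2.1 ∈ ball (0 : ℂ) 1 \ {0} ∧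
      x.2.2.1 ∈ ball (0 : ℂ) 1 ∧ x.2.2.2 ∈ ball (0 : ℂ) 1 \ {0} ∧
      ‖x.1 - x.2.2.1‖ / ‖1 - (starRingEnd ℂ) x.1 * x.2.2.1‖ <
        ‖x.2.1 - x.2.2.2‖ / ‖1 - (starRingEnd ℂ) x.2.1 * x.2.2.2‖} := by
  show IsPathConnected mobiusLtSet
  refine (isPathConnected_punctured_disc_distinct_pairs.image
    (f := fun p ↦ ((0 : ℂ), p.1, (0 : ℂ), p.2)) (by fun_prop)).of_subset_of_forall_joinedIn ?_ ?_
  · rintro _ ⟨⟨b, d⟩, ⟨hb, hd⟩, rfl⟩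
    exact mk_zero_mem_mobiusLtSet hb hd
  · rintro ⟨a, b, c, d⟩ h
    obtain ⟨-, hb, -, ⟨hd, hd0⟩, hlt⟩ := id h
    have hdb : d ≠ b := by
      rintro rfl
      exact (hlt.trans_eq (mobiusDist_self d)).not_ge (mobiusDist_nonneg a c)
    have hd' : d ∈ ball (0 : ℂ) 1 \ {0, b} := ⟨hd, by rintro (h0 | rfl) <;> contradiction⟩
    exact ⟨_, ⟨(b, d), ⟨hb, hd'⟩, rfl⟩, (joinedIn_mobiusLtSet_zero_zero h).symm⟩
end
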